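/- Let B_r be the (r+1)×(r+1) matrix with entries |i_{[0,π]}(n,m)| for 0 ≤ n, m ≤ r, i.e., 1/2 on the diagonal, 0 when |n−m| is nonzero even, and 1/(π|n−m|) when |n−m| is odd. Then for odd r ≥ 5, the operator norm of B_r satisfies ‖B_r‖ > (1 + 1/3 + 1/5 + … + 1/r)/π; consequently sup_r ‖B_r‖ = ∞. -/

import Mathlib

open Real

/-- The entries `|i_{[0,π]}(n,m)|`. -/
noncomputable def absIX (n m : ℕ) : ℝ :=
  if n = m then 1 / 2
  else if Even ((n : ℤ) - m) then 0
  else 1 / (π * |(n : ℝ) - m|)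

/-- The finite principal submatrix `B_r` of `|i_{[0,π]}|` of size `(r+1) × (r+1)`. -/
noncomputable def Br (r : ℕ) : Matrix (Fin (r + 1)) (Fin (r + 1)) ℝ :=
  fun i j => absIX i j

/-- The operator norm of a finite real matrix acting on Euclidean space. -/
noncomputable def matOpNorm {n : ℕ} (B : Matrix (Fin n) (Fin n) ℝ) : ℝ :=
  ‖LinearMap.toContinuousLinearMap (Matrix.toEuclideanLin B)‖

/-!
Testing `B_r` against the all-ones vector `e` gives `‖B_r‖ ‖e‖² ≥ ⟪e, B_r e⟫ = ∑ᵢ (row sum i)`,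
so `‖B_r‖` is at least the smallest row sum. Row `N` consists of `1/2` and, on either side of the
diagonal, the reciprocals of the odd distances up to `N` and up to `r - N`, divided by `π`. With
`oddHarmonic k = 1 + 1/3 + ⋯ + 1/(2k-1)`, which is subadditive because its terms decrease, the row
sum is `1/2 + (oddHarmonic a + oddHarmonic b)/π` with `a + b = (r+1)/2` for odd `r`, hence at least
`1/2 + oddHarmonic((r+1)/2)/π`. Finally `oddHarmonic` diverges like half the harmonic series.
-/

open Finset Filter

theorem Matrix.le_opNorm_toEuclideanLin_of_le_sum_row {ι : Type*} [Fintype ι] [DecidableEq ι]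
    [Nonempty ι] (A : Matrix ι ι ℝ) {c : ℝ} (h : ∀ i, c ≤ ∑ j, A i j) :
    c ≤ ‖LinearMap.toContinuousLinearMap (Matrix.toEuclideanLin A)‖ := by
  set T := LinearMap.toContinuousLinearMap (Matrix.toEuclideanLin A)
  set e : EuclideanSpace ℝ ι := WithLp.toLp 2 (fun _ => 1)
  have hcard : (0 : ℝ) < Fintype.card ι := by exact_mod_cast Fintype.card_pos
  have he : ‖e‖ ^ 2 = Fintype.card ι := by
    rw [EuclideanSpace.norm_eq, sq_sqrt (by positivity)]
    simp [e]
  have hTe : inner ℝ e (T e) = ∑ i, ∑ j, A i j := by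
    simp [T, e, PiLp.inner_apply, Matrix.mulVec, dotProduct]
  have : Fintype.card ι * c ≤ ‖T‖ * Fintype.card ι :=
    calc Fintype.card ι * c = ∑ _i : ι, c := by simp
      _ ≤ inner ℝ e (T e) := hTe ▸ sum_le_sum fun i _ => h i
      _ ≤ ‖e‖ * ‖T e‖ := real_inner_le_norm e (T e)
      _ ≤ ‖e‖ * (‖T‖ * ‖e‖) := by gcongr; exact T.le_opNorm e
      _ = ‖T‖ * Fintype.card ι := by rw [← he]; ring
  nlinarith

theorem Finset.sum_range_add_le_of_antitone {M : Type*} [AddCommMonoid M] [PartialOrder M]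
    [IsOrderedAddMonoid M] {f : ℕ → M} (hf : Antitone f) (m n : ℕ) :
    ∑ k ∈ range (m + n), f k ≤ ∑ k ∈ range m, f k + ∑ k ∈ range n, f k := by
  rw [sum_range_add]
  gcongr with k
  exact hf (Nat.le_add_left k m)

noncomputable def oddHarmonic (n : ℕ) : ℝ :=
  ∑ j ∈ range n, 1 / (2 * (j : ℝ) + 1)

lemma oddHarmonic_succ (n : ℕ) : oddHarmonic (n + 1) = oddHarmonic n + 1 / (2 * n + 1) :=
  sum_range_succ _ n

lemma oddHarmonic_add_le (m n : ℕ) : oddHarmonic (m + n) ≤ oddHarmonic m + oddHarmonic n :=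
  sum_range_add_le_of_antitone
    (fun _ _ hij => one_div_le_one_div_of_le (by positivity) (by gcongr)) m n

lemma tendsto_oddHarmonic_atTop : Tendsto oddHarmonic atTop atTop := by
  have h := tendsto_sum_range_one_div_nat_succ_atTop.const_mul_atTop (one_half_pos (α := ℝ))
  refine tendsto_atTop_mono (fun n => ?_) h
  rw [oddHarmonic, mul_sum]
  gcongr with j
  rw [one_div_mul_one_div, one_div_le_one_div (by positivity) (by positivity)]
  linarith

lemma absIX_comm (n m : ℕ) : absIX n m = absIX m n := by
  simp only [absIX, eq_comm (a := n), abs_sub_comm (n : ℝ), ← even_neg (a := (m : ℤ) - n), neg_sub]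

lemma absIX_add_add (a n m : ℕ) : absIX (a + n) (a + m) = absIX n m := by
  simp only [absIX, Nat.add_left_cancel_iff, Nat.cast_add, add_sub_add_left_eq_sub]

lemma absIX_zero_of_odd {m : ℕ} (hm : Odd m) : absIX 0 m = 1 / (π * m) := by
  have hm0 : 0 ≠ m := hm.pos.ne
  have hodd : ¬ Even (((0 : ℕ) : ℤ) - m) := by simpa using hm
  rw [absIX, if_neg hm0, if_neg hodd, Nat.cast_zero, zero_sub, abs_neg, Nat.abs_cast]

lemma absIX_zero_of_even {m : ℕ} (hm : Even m) (hm0 : m ≠ 0) : absIX 0 m = 0 := by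
  have heven : Even ((0 : ℕ) - (m : ℤ)) := by simpa using hm
  simp only [absIX, if_neg hm0.symm, if_pos heven]

lemma sum_range_absIX_zero_succ (n : ℕ) :
    ∑ k ∈ range n, absIX 0 (k + 1) = oddHarmonic ((n + 1) / 2) / π := by
  induction n with
  | zero => simp [oddHarmonic]
  | succ n ih =>
    rw [sum_range_succ, ih]
    obtain ⟨p, rfl | rfl⟩ := Nat.even_or_odd' n
    · rw [show (2 * p + 1) / 2 = p by omega, show (2 * p + 1 + 1) / 2 = p + 1 by omega,
        oddHarmonic_succ, absIX_zero_of_odd (odd_two_mul_add_one p)]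
      push_cast
      field_simp
    · rw [show (2 * p + 1 + 1 + 1) / 2 = (2 * p + 1 + 1) / 2 by omega,
        absIX_zero_of_even ⟨p + 1, by ring⟩ (by omega), add_zero]

lemma absIX_self_add (n k : ℕ) : absIX n (n + k) = absIX 0 k := by
  simpa using absIX_add_add n 0 k

lemma sum_range_absIX (r N : ℕ) (hN : N ≤ r) :
    ∑ m ∈ range (r + 1), absIX N m
      = 1 / 2 + (oddHarmonic ((N + 1) / 2) + oddHarmonic ((r - N + 1) / 2)) / π := by
  have hleft : ∑ m ∈ range N, absIX N m = oddHarmonic ((N + 1) / 2) / π := by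
    rw [← sum_range_reflect, ← sum_range_absIX_zero_succ]
    refine sum_congr rfl fun k hk => ?_
    have hk : N = N - 1 - k + (k + 1) := by have := mem_range.mp hk; omega
    rw [absIX_comm]
    nth_rw 2 [hk]
    exact absIX_self_add _ _
  have hright : ∑ k ∈ range (r - N), absIX N (N + 1 + k) = oddHarmonic ((r - N + 1) / 2) / π := by
    simp only [add_assoc, absIX_self_add, add_comm 1, sum_range_absIX_zero_succ]
  rw [show r + 1 = N + 1 + (r - N) by omega, sum_range_add, sum_range_succ, hleft, hright,
    absIX, if_pos rfl]
  ring

lemma half_add_oddHarmonic_div_pi_le_matOpNorm_Br {r : ℕ} (hr : Odd r) :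
    1 / 2 + oddHarmonic ((r + 1) / 2) / π ≤ matOpNorm (Br r) := by
  obtain ⟨t, rfl⟩ := hr
  refine Matrix.le_opNorm_toEuclideanLin_of_le_sum_row _ fun i => ?_
  simp only [Br]
  rw [Fin.sum_univ_eq_sum_range (fun m => absIX i m), sum_range_absIX _ i (by omega)]
  have := oddHarmonic_add_le ((i + 1) / 2) ((2 * t + 1 - i + 1) / 2)
  rw [show (i + 1) / 2 + (2 * t + 1 - i + 1) / 2 = (2 * t + 1 + 1) / 2 by omega] at this
  gcongr

/-- For odd `r ≥ 5`, `‖B_r‖ > (1 + 1/3 + ⋯ + 1/r)/π`; consequently the norms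
`‖B_r‖` are not uniformly bounded. -/
theorem stmt15 :
    (∀ r : ℕ, 5 ≤ r → Odd r →
      (∑ j ∈ Finset.range ((r + 1) / 2), 1 / (2 * (j : ℝ) + 1)) / π < matOpNorm (Br r)) ∧
    ¬ ∃ C : ℝ, ∀ r : ℕ, matOpNorm (Br r) ≤ C := by
  have lower (r : ℕ) (hr : Odd r) : oddHarmonic ((r + 1) / 2) / π < matOpNorm (Br r) := by
    linarith [half_add_oddHarmonic_div_pi_le_matOpNorm_Br hr]
  refine ⟨fun r _ hr => lower r hr, ?_⟩
  rintro ⟨C, hC⟩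
  obtain ⟨n, hn : C * π < oddHarmonic (n + 1)⟩ :=
    ((tendsto_oddHarmonic_atTop.comp (tendsto_add_atTop_nat 1)).eventually_gt_atTop (C * π)).exists
  have h := lower (2 * n + 1) (odd_two_mul_add_one n)
  rw [show (2 * n + 1 + 1) / 2 = n + 1 by omega, div_lt_iff₀ pi_pos] at h
  linarith [hn, mul_le_mul_of_nonneg_right (hC (2 * n + 1)) pi_pos.le]
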